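/- Let α : ℝ² × ℝ² → ℝ be a continuous bilinear map. Then there exists a constant C > 0 such that for all continuous compactly supported a₀, a₁, a₂ : ℝ² → ℂ, |∫_{ℝ²} ∫_{ℝ²} α(u, v) a₀(−u−v) a₁(u) a₂(v) du dv| ≤ C ν₃(a₀) ν₃(a₁) ν₃(a₂), where ν₃(a) := ‖(1+‖·‖)³ a‖_{L²(ℝ²)}. In particular, the cyclic 2-cocycle τ_α on the convolution algebra C_c^∞(ℝ²) associated to an invariant 2-form α extends continuously to the rapid decay algebra H^∞_L(ℝ²). -/

import Mathlib

open MeasureTheory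
open scoped ENNReal

/-- The rapid decay seminorm `ν_k(a) = ‖(1+‖·‖)^k a‖_{L²}` on functions on `ℝ²`. -/
noncomputable def rdSeminorm2 (k : ℕ) (a : EuclideanSpace ℝ (Fin 2) → ℂ) : ℝ≥0∞ :=
  eLpNorm (fun x => ((1 + ‖x‖) ^ k : ℝ) • a x) 2 volume

/-!
Since `|α(u, v)| ≤ ‖α‖ (1 + ‖u‖)(1 + ‖v‖)`, the integrand is dominated by
`‖α‖ |a₀(-u-v)| · (1 + ‖u‖)|a₁(u)| · (1 + ‖v‖)|a₂(v)|`. For fixed `u`, Cauchy–Schwarz and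
translation invariance bound the `v`-integral by `‖a₀‖₂ ‖(1 + ‖·‖) a₂‖₂ ≤ ν₃(a₀) ν₃(a₂)`.
What remains is the weighted `L¹` norm of `a₁`; writing `(1 + ‖u‖) = (1 + ‖u‖)⁻² (1 + ‖u‖)³`,
Cauchy–Schwarz bounds it by `ν₃(a₁)` times `‖(1 + ‖·‖)⁻²‖₂`, which is finite since
`(1 + ‖u‖)⁻⁴` is integrable on `ℝ²`.
-/

theorem lintegral_enorm_mul_le_eLpNorm_two_mul {X E F : Type*} [MeasurableSpace X]
    {μ : Measure X} [NormedAddCommGroup E] [NormedAddCommGroup F] {f : X → E} {g : X → F}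
    (hf : AEStronglyMeasurable f μ) (hg : AEStronglyMeasurable g μ) :
    ∫⁻ x, ‖f x‖ₑ * ‖g x‖ₑ ∂μ ≤ eLpNorm f 2 μ * eLpNorm g 2 μ := by
  have h := eLpNorm_le_eLpNorm_mul_eLpNorm'_of_norm (p := 2) (q := 2) (r := 1) hf hg
    (fun x y => ‖x‖ * ‖y‖) 1 (.of_forall fun x => by simp)
  simpa [eLpNorm_one_eq_lintegral_enorm, enorm_mul] using h

theorem ContinuousLinearMap.norm_apply_apply_le_mul_one_add_norm {V : Type*}
    [NormedAddCommGroup V] [NormedSpace ℝ V] (α : V →L[ℝ] V →L[ℝ] ℝ) (u v : V) :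
    ‖α u v‖ ≤ ‖α‖ * ((1 + ‖u‖) * (1 + ‖v‖)) :=
  (α.le_opNorm₂ u v).trans <| by
    rw [mul_assoc]
    gcongr <;> simp

theorem eLpNorm_comp_neg_sub {V G : Type*} [AddGroup V] [MeasurableSpace V] [MeasurableAdd V]
    [MeasurableNeg V] {μ : Measure V} [μ.IsAddLeftInvariant] [μ.IsNegInvariant]
    [NormedAddCommGroup G] {a : V → G} (ha : AEStronglyMeasurable a μ) (u : V) (p : ℝ≥0∞) :
    eLpNorm (fun v => a (-u - v)) p μ = eLpNorm a p μ :=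
  eLpNorm_comp_measurePreserving ha (Measure.measurePreserving_sub_left μ (-u))

section RapidDecay

variable {V G : Type*} [NormedAddCommGroup V] [MeasurableSpace V] {μ : Measure V}
  [NormedAddCommGroup G] [NormedSpace ℝ G]

noncomputable def rdSeminorm (μ : Measure V) (k : ℕ) (a : V → G) : ℝ≥0∞ :=
  eLpNorm (fun x => ((1 + ‖x‖) ^ k : ℝ) • a x) 2 μ

theorem rdSeminorm_zero (a : V → G) : rdSeminorm μ 0 a = eLpNorm a 2 μ := by
  simp [rdSeminorm]

theorem rdSeminorm_mono {j k : ℕ} (hjk : j ≤ k) (a : V → G) :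
    rdSeminorm μ j a ≤ rdSeminorm μ k a := by
  refine eLpNorm_mono fun x => ?_
  simp only [norm_smul, norm_pow, Real.norm_eq_abs]
  have h1 : 1 ≤ |1 + ‖x‖| := by rw [abs_of_nonneg (by positivity)]; simp
  gcongr

variable [OpensMeasurableSpace V]

theorem lintegral_enorm_one_add_norm_pow_smul_le (j k : ℕ) {a : V → G}
    (ha : AEStronglyMeasurable a μ) :
    ∫⁻ x, ‖((1 + ‖x‖) ^ j : ℝ) • a x‖ₑ ∂μ ≤
      eLpNorm (fun x : V => (1 + ‖x‖) ^ ((j : ℝ) - k)) 2 μ * rdSeminorm μ k a := by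
  have h_split (x : V) : ‖((1 + ‖x‖) ^ j : ℝ) • a x‖ₑ =
      ‖(1 + ‖x‖) ^ ((j : ℝ) - k)‖ₑ * ‖((1 + ‖x‖) ^ k : ℝ) • a x‖ₑ := by
    have hx : 0 < 1 + ‖x‖ := by positivity
    rw [← enorm_smul, smul_smul, Real.rpow_sub hx, Real.rpow_natCast, Real.rpow_natCast,
      div_mul_cancel₀ _ (by positivity)]
  simp_rw [h_split]
  exact lintegral_enorm_mul_le_eLpNorm_two_mul (by fun_prop : Measurable _).aestronglyMeasurable
    (by fun_prop)

theorem memLp_two_one_add_norm_rpow_neg [NormedSpace ℝ V] [FiniteDimensional ℝ V] [BorelSpace V]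
    [μ.IsAddHaarMeasure] {r : ℝ} (hr : (Module.finrank ℝ V : ℝ) < 2 * r) :
    MemLp (fun x : V => (1 + ‖x‖) ^ (-r)) 2 μ := by
  refine (memLp_two_iff_integrable_sq (by fun_prop : Measurable _).aestronglyMeasurable).2 ?_
  refine (integrable_one_add_norm (μ := μ) hr).congr (.of_forall fun x => ?_)
  dsimp only
  rw [← Real.rpow_natCast, ← Real.rpow_mul (by positivity)]
  ring_nf

end RapidDecay

section AreaCocycle

variable {V : Type*} [NormedAddCommGroup V] [NormedSpace ℝ V] [MeasurableSpace V] [BorelSpace V]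
  {μ : Measure V} [μ.IsAddLeftInvariant] [μ.IsNegInvariant]

theorem lintegral_lintegral_enorm_area_integrand_le (α : V →L[ℝ] V →L[ℝ] ℝ) {a₀ a₁ a₂ : V → ℂ}
    (h₀ : AEStronglyMeasurable a₀ μ) (h₁ : AEStronglyMeasurable a₁ μ)
    (h₂ : AEStronglyMeasurable a₂ μ) :
    ∫⁻ u, ∫⁻ v, ‖((α u v : ℝ) : ℂ) * a₀ (-u - v) * a₁ u * a₂ v‖ₑ ∂μ ∂μ ≤
      ‖α‖ₑ * eLpNorm (fun x : V => (1 + ‖x‖) ^ (-2 : ℝ)) 2 μ *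
        rdSeminorm μ 3 a₀ * rdSeminorm μ 3 a₁ * rdSeminorm μ 3 a₂ := by
  set w : V → ℝ := fun x => 1 + ‖x‖
  have h_pt (u v : V) : ‖((α u v : ℝ) : ℂ) * a₀ (-u - v) * a₁ u * a₂ v‖ₑ ≤
      ‖α‖ₑ * ‖w u • a₁ u‖ₑ * (‖a₀ (-u - v)‖ₑ * ‖w v • a₂ v‖ₑ) := by
    have hα : ‖((α u v : ℝ) : ℂ)‖₊ ≤ ‖α‖₊ * ‖w u‖₊ * ‖w v‖₊ := by
      rw [Complex.nnnorm_real, ← NNReal.coe_le_coe]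
      push_cast
      simpa [w, mul_assoc, abs_of_pos (by positivity : (0 : ℝ) < 1 + ‖u‖),
        abs_of_pos (by positivity : (0 : ℝ) < 1 + ‖v‖)] using
        α.norm_apply_apply_le_mul_one_add_norm u v
    simp only [enorm_mul, enorm_smul]
    calc ‖((α u v : ℝ) : ℂ)‖ₑ * ‖a₀ (-u - v)‖ₑ * ‖a₁ u‖ₑ * ‖a₂ v‖ₑ
        ≤ ‖α‖ₑ * ‖w u‖ₑ * ‖w v‖ₑ * ‖a₀ (-u - v)‖ₑ * ‖a₁ u‖ₑ * ‖a₂ v‖ₑ := by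
          gcongr
          simp only [enorm_eq_nnnorm]
          exact_mod_cast hα
      _ = _ := by ring
  have h_inner (u : V) : ∫⁻ v, ‖a₀ (-u - v)‖ₑ * ‖w v • a₂ v‖ₑ ∂μ ≤
      rdSeminorm μ 0 a₀ * rdSeminorm μ 1 a₂ := by
    have h_shift := h₀.comp_measurePreserving (Measure.measurePreserving_sub_left μ (-u))
    have h_weighted : AEStronglyMeasurable (fun v => w v • a₂ v) μ :=
      (continuous_const.add continuous_norm).aestronglyMeasurable.smul h₂
    calc ∫⁻ v, ‖a₀ (-u - v)‖ₑ * ‖w v • a₂ v‖ₑ ∂μ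
        ≤ eLpNorm (fun v => a₀ (-u - v)) 2 μ * eLpNorm (fun v => w v • a₂ v) 2 μ :=
          lintegral_enorm_mul_le_eLpNorm_two_mul h_shift h_weighted
      _ = rdSeminorm μ 0 a₀ * rdSeminorm μ 1 a₂ := by
          rw [eLpNorm_comp_neg_sub h₀, rdSeminorm_zero]
          simp [rdSeminorm, w]
  have h_outer : ∫⁻ u, ‖w u • a₁ u‖ₑ ∂μ ≤
      eLpNorm (fun x : V => (1 + ‖x‖) ^ (-2 : ℝ)) 2 μ * rdSeminorm μ 3 a₁ := by
    have h_exp : ((1 : ℕ) : ℝ) - (3 : ℕ) = -2 := by norm_num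
    simpa only [pow_one, h_exp] using lintegral_enorm_one_add_norm_pow_smul_le 1 3 h₁
  have h_meas : AEMeasurable (fun u => ‖α‖ₑ * ‖w u • a₁ u‖ₑ) μ := by
    fun_prop
  calc ∫⁻ u, ∫⁻ v, ‖((α u v : ℝ) : ℂ) * a₀ (-u - v) * a₁ u * a₂ v‖ₑ ∂μ ∂μ
      ≤ ∫⁻ u, ∫⁻ v, ‖α‖ₑ * ‖w u • a₁ u‖ₑ * (‖a₀ (-u - v)‖ₑ * ‖w v • a₂ v‖ₑ) ∂μ ∂μ := by
        gcongr with u v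
        exact h_pt u v
    _ = ∫⁻ u, ‖α‖ₑ * ‖w u • a₁ u‖ₑ * ∫⁻ v, ‖a₀ (-u - v)‖ₑ * ‖w v • a₂ v‖ₑ ∂μ ∂μ := by
        simp_rw [lintegral_const_mul' _ _ (ENNReal.mul_ne_top enorm_ne_top enorm_ne_top)]
    _ ≤ ∫⁻ u, ‖α‖ₑ * ‖w u • a₁ u‖ₑ * (rdSeminorm μ 0 a₀ * rdSeminorm μ 1 a₂) ∂μ := by
        gcongr with u
        exact h_inner u
    _ = ‖α‖ₑ * (∫⁻ u, ‖w u • a₁ u‖ₑ ∂μ) * (rdSeminorm μ 0 a₀ * rdSeminorm μ 1 a₂) := by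
        rw [lintegral_mul_const'' _ h_meas, lintegral_const_mul' _ _ enorm_ne_top]
    _ ≤ ‖α‖ₑ * (eLpNorm (fun x : V => (1 + ‖x‖) ^ (-2 : ℝ)) 2 μ * rdSeminorm μ 3 a₁) *
          (rdSeminorm μ 3 a₀ * rdSeminorm μ 3 a₂) := by
        gcongr
        exacts [rdSeminorm_mono (by norm_num) a₀, rdSeminorm_mono (by norm_num) a₂]
    _ = _ := by ring

end AreaCocycle

/-- Let `α : ℝ² × ℝ² → ℝ` be a continuous bilinear map.  Then there is
`C > 0` such that for all continuous compactly supported `a₀, a₁, a₂ : ℝ² → ℂ`,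
`|∫∫ α(u,v) a₀(−u−v) a₁(u) a₂(v) du dv| ≤ C ν₃(a₀) ν₃(a₁) ν₃(a₂)`: the cyclic 2-cocycle on
the convolution algebra of `ℝ²` associated to an invariant 2-form extends continuously to
the rapid decay algebra `H^∞_L(ℝ²)`. -/
theorem area_cocycle_extends_to_rapid_decay
    (α : EuclideanSpace ℝ (Fin 2) →L[ℝ] EuclideanSpace ℝ (Fin 2) →L[ℝ] ℝ) :
    ∃ C > (0 : ℝ), ∀ a₀ a₁ a₂ : EuclideanSpace ℝ (Fin 2) → ℂ,
      Continuous a₀ → HasCompactSupport a₀ →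
      Continuous a₁ → HasCompactSupport a₁ →
      Continuous a₂ → HasCompactSupport a₂ →
        ENNReal.ofReal
            ‖∫ u : EuclideanSpace ℝ (Fin 2), ∫ v : EuclideanSpace ℝ (Fin 2),
                ((α u v : ℝ) : ℂ) * a₀ (-u - v) * a₁ u * a₂ v‖ ≤
          ENNReal.ofReal C * rdSeminorm2 3 a₀ * rdSeminorm2 3 a₁ * rdSeminorm2 3 a₂ := by
  set K := eLpNorm (fun x : EuclideanSpace ℝ (Fin 2) => (1 + ‖x‖) ^ (-2 : ℝ)) 2 volume
  have hK : K ≠ ∞ := (memLp_two_one_add_norm_rpow_neg (by norm_num)).eLpNorm_ne_top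
  have hC : ‖α‖ₑ * K ≤ ENNReal.ofReal (‖α‖ * K.toReal + 1) := by
    rw [← ofReal_norm, ← ENNReal.ofReal_toReal hK, ← ENNReal.ofReal_mul (norm_nonneg α),
      ENNReal.toReal_ofReal ENNReal.toReal_nonneg]
    exact ENNReal.ofReal_le_ofReal (by linarith)
  refine ⟨‖α‖ * K.toReal + 1, by positivity, fun a₀ a₁ a₂ h₀ _ h₁ _ h₂ _ => ?_⟩
  calc ENNReal.ofReal ‖∫ u, ∫ v, ((α u v : ℝ) : ℂ) * a₀ (-u - v) * a₁ u * a₂ v‖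
      ≤ ∫⁻ u, ∫⁻ v, ‖((α u v : ℝ) : ℂ) * a₀ (-u - v) * a₁ u * a₂ v‖ₑ := by
        rw [ofReal_norm]
        exact (enorm_integral_le_lintegral_enorm _).trans
          (lintegral_mono fun u => enorm_integral_le_lintegral_enorm _)
    _ ≤ ‖α‖ₑ * K * rdSeminorm2 3 a₀ * rdSeminorm2 3 a₁ * rdSeminorm2 3 a₂ :=
        lintegral_lintegral_enorm_area_integrand_le α h₀.aestronglyMeasurable
          h₁.aestronglyMeasurable h₂.aestronglyMeasurable
    _ ≤ _ := by gcongr
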